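/- arXiv:2404.16628 — 2 statements merged into one kernel-verified Lean document; each statement's English description precedes it below -/
import Mathlib

section
/- For a group pair (G,𝒫) the following are equivalent: (1) (G,𝒫) has finite packing, i.e. there is a finite subset D ⊆ G/𝒫 such that for every finite set of distinct cosets {g₁P₁, …, g_dP_d} ⊆ G/𝒫 with ⋂_{i=1}^d g_iP_ig_i⁻¹ infinite, there is g ∈ G with g·g_iP_i ∈ D for all i; (2) there is r > 0 such that for every finite set of cosets {g₁P₁, …, g_kP_k} ⊆ G/𝒫 with ⋂_{i=1}^k g_iP_ig_i⁻¹ infinite, the intersection of neighborhoods ⋂_{i=1}^k N_r(g_iP_i) is non-empty. -/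
/-!
Both conditions are invariant under translating all cosets by a common element, so each says
that the cosets of a "packable" family can be moved, all at once, close to the identity.
Given the finite set `D`, every coset in `D` meets one fixed ball around `1`, and translating
back gives a common point of the neighbourhoods. Conversely, translating a common point of the
`r`-neighbourhoods to `1` puts every coset of the family among the cosets meeting the `r`-ball
around `1`; since balls of a finitely generated group are finite and `𝒫` is finite, there are
only finitely many such cosets, and they form `D`.
-/

open scoped Pointwise ENNReal NNReal

namespace CIC

variable {G : Type*} [Group G] {H : Type*} [Group H]

/-- Word length of `g` with respect to the generating set `S`: the least `n` such that `g`
is a product of `n` elements of `S ∪ S⁻¹`. -/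
noncomputable def wordLength (S : Set G) (g : G) : ℕ :=
  sInf {n | ∃ l : List G, (∀ x ∈ l, x ∈ S ∨ x⁻¹ ∈ S) ∧ l.length = n ∧ l.prod = g}

/-- The word metric on `G` associated to the generating set `S`. -/
noncomputable def wdist (S : Set G) (g h : G) : ℕ := wordLength S (g⁻¹ * h)

/-- Closed `r`-neighborhood of `A` with respect to the word metric of `S`. -/
def nbhd (S : Set G) (r : ℝ) (A : Set G) : Set G :=
  {x | ∃ a ∈ A, (wdist S a x : ℝ) ≤ r}

/-- Hausdorff distance between subsets of `G`, valued in `[0,∞]`: the infimum of those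
`r ≥ 0` such that each set is contained in the closed `r`-neighborhood of the other,
the infimum of the empty set being `∞`. -/
noncomputable def hdist (S : Set G) (A B : Set G) : ℝ≥0∞ :=
  ⨅ (r : ℝ≥0) (_ : A ⊆ nbhd S (r : ℝ) B ∧ B ⊆ nbhd S (r : ℝ) A), (r : ℝ≥0∞)

/-- The conjugate subgroup `g P g⁻¹`. -/
def conj (g : G) (P : Subgroup G) : Subgroup G := P.map (MulAut.conj g).toMonoidHom

/-- The set `G/𝒫` of all left cosets `gP` with `g ∈ G` and `P ∈ 𝒫`. -/
def cosets (Ps : Finset (Subgroup G)) : Set (Set G) :=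
  {A | ∃ (g : G) (P : Subgroup G), P ∈ Ps ∧ A = g • (P : Set G)}

/-- A group pair `(G, 𝒫)`: `S` is a finite generating set of `G` and `𝒫` is a finite
collection of infinite subgroups of `G`. -/
structure IsGroupPair (S : Finset G) (Ps : Finset (Subgroup G)) : Prop where
  generates : Subgroup.closure (S : Set G) = ⊤
  infinite : ∀ P ∈ Ps, (P : Set G).Infinite

/-- An `(L,C,M)`-quasi-isometry of group pairs `q : (G,𝒫) → (H,𝒬)`. -/
structure IsPairQI (S : Finset G) (T : Finset H)
    (Ps : Finset (Subgroup G)) (Qs : Finset (Subgroup H))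
    (L C M : ℝ≥0) (q : G → H) : Prop where
  one_le : 1 ≤ L
  lower : ∀ a b : G, (wdist (S : Set G) a b : ℝ) / L - C ≤ (wdist (T : Set H) (q a) (q b) : ℝ)
  upper : ∀ a b : G, (wdist (T : Set H) (q a) (q b) : ℝ) ≤ L * (wdist (S : Set G) a b : ℝ) + C
  dense : ∀ y : H, ∃ x : G, (wdist (T : Set H) (q x) y : ℝ) ≤ C
  coset_fwd : ∀ A ∈ cosets Ps, ∃ B ∈ cosets Qs, hdist (T : Set H) (q '' A) B < (M : ℝ≥0∞)
  coset_bwd : ∀ B ∈ cosets Qs, ∃ A ∈ cosets Ps, hdist (T : Set H) (q '' A) B < (M : ℝ≥0∞)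

/-- `(G,𝒫)` has finite packing: there is a finite set `D` of cosets such that every finite
set of distinct cosets `{g₁P₁, …, g_dP_d}` with `⋂ᵢ gᵢPᵢgᵢ⁻¹` infinite can be translated
into `D`.  (For a left coset `A = gP` the subgroup `gPg⁻¹` is exactly the stabilizer of `A`
under the left multiplication action of `G` on subsets.) -/
def FinitePacking (Ps : Finset (Subgroup G)) : Prop :=
  ∃ D : Finset (Set G), ↑D ⊆ cosets Ps ∧
    ∀ F : Finset (Set G), ↑F ⊆ cosets Ps →
      ((⨅ A ∈ F, MulAction.stabilizer G A : Subgroup G) : Set G).Infinite →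
      ∃ g : G, ∀ A ∈ F, g • A ∈ D

section WordMetric

variable {S : Set G}

lemma wdist_mul_left (g a b : G) : wdist S (g * a) (g * b) = wdist S a b := by
  simp only [wdist, mul_inv_rev, mul_assoc, inv_mul_cancel_left]

lemma smul_mem_nbhd_smul_iff {r : ℝ} {A : Set G} (g x : G) :
    g * x ∈ nbhd S r (g • A) ↔ x ∈ nbhd S r A := by
  constructor
  · rintro ⟨_, ⟨a, ha, rfl⟩, hax⟩
    exact ⟨a, ha, by simpa only [smul_eq_mul, wdist_mul_left] using hax⟩
  · rintro ⟨a, ha, hax⟩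
    exact ⟨g * a, Set.smul_mem_smul_set ha, by rwa [wdist_mul_left]⟩

lemma exists_list_length_eq_wordLength (hgen : Subgroup.closure S = ⊤) (g : G) :
    ∃ l : List G, (∀ x ∈ l, x ∈ S ∨ x⁻¹ ∈ S) ∧ l.length = wordLength S g ∧ l.prod = g := by
  have hg : g ∈ Submonoid.closure (S ∪ S⁻¹) := by
    rw [← Subgroup.closure_toSubmonoid, hgen]
    exact Subgroup.mem_top g
  obtain ⟨l, hl, hprod⟩ := Submonoid.exists_list_of_mem_closure hg
  exact (Nat.sInf_mem ⟨l.length, l, hl, rfl, hprod⟩ : wordLength S g ∈ _)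

lemma finite_setOf_wordLength_le (hS : S.Finite) (hgen : Subgroup.closure S = ⊤) (n : ℕ) :
    {g : G | wordLength S g ≤ n}.Finite := by
  have := (hS.union hS.inv).to_subtype
  refine ((List.finite_length_le (S ∪ S⁻¹ : Set G) n).image
    fun l => (l.map Subtype.val).prod).subset fun g hg => ?_
  obtain ⟨l, hl, hlen, hprod⟩ := exists_list_length_eq_wordLength hgen g
  refine ⟨l.attach.map fun x => ⟨x.1, hl x.1 x.2⟩, ?_, ?_⟩
  · simpa [hlen] using hg
  · simp [hprod]

lemma finite_setOf_wdist_le_one (hS : S.Finite) (hgen : Subgroup.closure S = ⊤) (r : ℝ) :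
    {b : G | (wdist S b 1 : ℝ) ≤ r}.Finite := by
  refine ((finite_setOf_wordLength_le hS hgen ⌊r⌋₊).preimage inv_injective.injOn).subset
    fun b hb => ?_
  have hb : (wdist S b 1 : ℝ) ≤ r := hb
  rw [wdist, mul_one] at hb
  exact Nat.le_floor hb

end WordMetric

section Cosets

variable {Ps : Finset (Subgroup G)}

lemma nonempty_of_mem_cosets {A : Set G} (hA : A ∈ cosets Ps) : A.Nonempty := by
  obtain ⟨g, P, -, rfl⟩ := hA
  exact ⟨g, 1, P.one_mem, mul_one g⟩

lemma smul_mem_cosets {A : Set G} (hA : A ∈ cosets Ps) (g : G) : g • A ∈ cosets Ps := by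
  obtain ⟨h, P, hP, rfl⟩ := hA
  exact ⟨g * h, P, hP, (mul_smul g h _).symm⟩

lemma finite_cosets_inter_setOf_one_mem_nbhd {S : Set G} (hS : S.Finite)
    (hgen : Subgroup.closure S = ⊤) (r : ℝ) :
    (cosets Ps ∩ {A | 1 ∈ nbhd S r A}).Finite := by
  refine (((finite_setOf_wdist_le_one hS hgen r).prod Ps.finite_toSet).image
    fun p : G × Subgroup G => p.1 • (p.2 : Set G)).subset ?_
  rintro _ ⟨⟨g, P, hP, rfl⟩, b, hb, hbr⟩
  refine ⟨(b, P), ⟨hbr, hP⟩, ?_⟩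
  obtain ⟨p, hp, rfl⟩ := hb
  exact (mul_smul g p _).trans (congrArg (g • ·) (leftCoset_mem_leftCoset P hp))

end Cosets

/-- A group pair has finite packing iff there is `r > 0` such that for every finite set of
cosets whose associated conjugates have infinite intersection, the intersection of the
`r`-neighborhoods of the cosets is non-empty. -/
theorem statement14 (S : Finset G) (Ps : Finset (Subgroup G)) (hpair : IsGroupPair S Ps) :
    FinitePacking Ps ↔
      ∃ r : ℝ, 0 < r ∧ ∀ F : Finset (Set G), ↑F ⊆ cosets Ps →
        ((⨅ A ∈ F, MulAction.stabilizer G A : Subgroup G) : Set G).Infinite →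
        (⋂ A ∈ F, nbhd (S : Set G) r A).Nonempty := by
  constructor
  · rintro ⟨D, hDsub, hD⟩
    have hnear : ∀ᶠ r in Filter.atTop, ∀ B ∈ D, 1 ∈ nbhd (S : Set G) r B := by
      refine (Filter.eventually_all_finset D).2 fun B hB => ?_
      obtain ⟨b, hb⟩ := nonempty_of_mem_cosets (hDsub hB)
      exact (Filter.eventually_ge_atTop _).mono fun r hr => ⟨b, hb, hr⟩
    obtain ⟨r, hr, hrD⟩ := ((Filter.eventually_gt_atTop 0).and hnear).exists
    refine ⟨r, hr, fun F hF hinf => ?_⟩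
    obtain ⟨g, hg⟩ := hD F hF hinf
    refine ⟨g⁻¹, Set.mem_iInter₂.2 fun A hA => ?_⟩
    rw [← smul_mem_nbhd_smul_iff g, mul_inv_cancel]
    exact hrD _ (hg A hA)
  · rintro ⟨r, -, hr⟩
    have hfin := finite_cosets_inter_setOf_one_mem_nbhd (Ps := Ps) S.finite_toSet
      hpair.generates r
    refine ⟨hfin.toFinset, by simp, fun F hF hinf => ?_⟩
    obtain ⟨x, hx⟩ := hr F hF hinf
    refine ⟨x⁻¹, fun A hA => hfin.mem_toFinset.2 ⟨smul_mem_cosets (hF hA) _, ?_⟩⟩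
    rw [Set.mem_ofPred_eq, ← inv_mul_cancel x, smul_mem_nbhd_smul_iff]
    exact Set.mem_iInter₂.1 hx A hA

end CIC
end

section
/- Let (G,𝒫) be a group pair of finite height. Let S and S' be maximal simplices in G/𝒫, and let Q = {g ∈ G : gS = S} and Q' = {g ∈ G : gS' = S'} be their setwise stabilizers. If g ∈ G and gQg⁻¹ ∩ Q' is infinite, then gS = S' and gQg⁻¹ = Q'. Consequently, a commensurated core of (G,𝒫) (a set of representatives, no two conjugate, of the conjugacy classes of setwise stabilizers of maximal simplices) is an almost malnormal collection: for Q, Q' in the core and g ∈ G, if gQg⁻¹ ∩ Q' is infinite then Q = Q' and g ∈ Q. -/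
/-!
Finite height bounds the number of cosets in a simplex, so maximal simplices are finite sets
of cosets. If `K = Stab(S) ∩ Stab(S')` is infinite, `K` permutes the finite set `S ∪ S'`, so the
subgroup fixing every coset of `S ∪ S'` has finite index in `K` and is infinite; hence `S ∪ S'`
is a simplex and maximality gives `S = S ∪ S' = S'`. Since `Stab(gS) = g Stab(S) g⁻¹`, the
conjugated statement reduces to this one applied to `gS` and `S'`.
-/

open scoped Pointwise ENNReal NNReal

namespace CIC

variable {G : Type*} [Group G] {H : Type*} [Group H]

/-- `𝒫` has finite height in `G`: there is a bound on the number of distinct cosets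
`g₁P₁, …, g_mP_m ∈ G/𝒫` such that `⋂ᵢ gᵢPᵢgᵢ⁻¹` is infinite.  (For a left coset `A = gP`
the subgroup `gPg⁻¹` is exactly the stabilizer of `A` under the left multiplication action
of `G` on subsets.) -/
def HasFiniteHeight (Ps : Finset (Subgroup G)) : Prop :=
  ∃ n : ℕ, ∀ F : Finset (Set G), ↑F ⊆ cosets Ps →
    ((⨅ A ∈ F, MulAction.stabilizer G A : Subgroup G) : Set G).Infinite → F.card ≤ n

/-- A simplex of the coset intersection complex: a subset `Sx ⊆ G/𝒫` such that every
non-empty finite subset `{g₁P₁, …, g_kP_k} ⊆ Sx` has `⋂ᵢ gᵢPᵢgᵢ⁻¹` infinite.  (For a left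
coset `A = gP` the subgroup `gPg⁻¹` is exactly the stabilizer of `A` under the left
multiplication action of `G` on subsets.) -/
def IsSimplex (Ps : Finset (Subgroup G)) (Sx : Set (Set G)) : Prop :=
  Sx ⊆ cosets Ps ∧ ∀ F : Finset (Set G), ↑F ⊆ Sx → F.Nonempty →
    ((⨅ A ∈ F, MulAction.stabilizer G A : Subgroup G) : Set G).Infinite

/-- A maximal simplex: one not properly contained in another simplex. -/
def IsMaxSimplex (Ps : Finset (Subgroup G)) (Sx : Set (Set G)) : Prop :=
  IsSimplex Ps Sx ∧ ∀ Sx' : Set (Set G), IsSimplex Ps Sx' → Sx ⊆ Sx' → Sx' = Sx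

/-- A collection of subgroups is almost malnormal: if `gQg⁻¹ ∩ Q'` is infinite then `Q = Q'`
and `g ∈ Q`. -/
def AlmostMalnormal (Qc : Set (Subgroup G)) : Prop :=
  ∀ Q ∈ Qc, ∀ Q' ∈ Qc, ∀ g : G,
    ((conj g Q ⊓ Q' : Subgroup G) : Set G).Infinite → Q = Q' ∧ g ∈ Q

end CIC

open MulAction

namespace Subgroup

variable {G : Type*} [Group G]

theorem infinite_inf_of_relIndex_ne_zero {H K : Subgroup G} (hHK : H.relIndex K ≠ 0)
    (hK : (K : Set G).Infinite) : ((H ⊓ K : Subgroup G) : Set G).Infinite := by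
  have hcard : Nat.card (H ⊓ K : Subgroup G) * H.relIndex K = Nat.card K := by
    rw [← inf_relIndex_right, ← relIndex_bot_left, ← relIndex_bot_left]
    exact relIndex_mul_relIndex _ _ _ bot_le inf_le_right
  intro hfin
  have := hfin.to_subtype
  have hpos : 0 < Nat.card K := hcard ▸ Nat.mul_pos Nat.card_pos (Nat.pos_of_ne_zero hHK)
  exact hK (Set.finite_coe_iff.mp (Nat.finite_of_card_ne_zero hpos.ne'))

end Subgroup

namespace MulAction

variable {G α : Type*} [Group G] [MulAction G α]

theorem relIndex_stabilizer_ne_zero {K : Subgroup G} {a : α} (h : (orbit K a).Finite) :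
    (stabilizer G a).relIndex K ≠ 0 := by
  have key : (stabilizer G a).subgroupOf K = stabilizer K a := by ext; rfl
  rw [Subgroup.relIndex, key, index_stabilizer]
  exact ((Set.ncard_pos h).2 (nonempty_orbit a)).ne'

theorem relIndex_fixingSubgroup_stabilizer_ne_zero {s : Set α} (hs : s.Finite) :
    (fixingSubgroup G s).relIndex (stabilizer G s) ≠ 0 := by
  have hfix : fixingSubgroup G s = ⨅ a : s, stabilizer G (a : α) := by
    ext g; simp [mem_fixingSubgroup_iff, Subgroup.mem_iInf]
  have := hs.to_subtype
  rw [hfix]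
  refine Subgroup.relIndex_iInf_ne_zero fun a => relIndex_stabilizer_ne_zero (hs.subset ?_)
  rintro _ ⟨k, rfl⟩
  have hk : (k : G) • s = s := k.2
  exact hk.subset (Set.smul_mem_smul_set a.2)

end MulAction

namespace CIC

variable {G : Type*} [Group G] {Ps : Finset (Subgroup G)}

theorem conj_stabilizer {α : Type*} [MulAction G α] (g : G) (a : α) :
    conj g (stabilizer G a) = stabilizer G (g • a) :=
  (stabilizer_smul_eq_stabilizer_map_conj g a).symm

theorem infinite_conj_iff (g : G) (P : Subgroup G) :
    ((conj g P : Subgroup G) : Set G).Infinite ↔ (P : Set G).Infinite := by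
  rw [conj, Subgroup.coe_map]
  exact Set.infinite_image_iff (MulAut.conj g).injective.injOn

theorem conj_iInf_stabilizer (g : G) (F : Finset (Set G)) :
    conj g (⨅ A ∈ F, stabilizer G A) = ⨅ A ∈ g • F, stabilizer G A := by
  ext x
  simp only [conj, Subgroup.mem_map, Subgroup.mem_iInf, mem_stabilizer_iff,
    Finset.mem_smul_finset, forall_exists_index, and_imp, forall_apply_eq_imp_iff₂]
  constructor
  · rintro ⟨y, hy, rfl⟩ A hA
    simp [mul_smul, hy A hA]
  · refine fun hx => ⟨g⁻¹ * x * g, fun A hA => ?_, by simp [mul_assoc]⟩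
    rw [mul_smul, mul_smul, hx A hA, inv_smul_smul]

theorem IsSimplex.smul {Sx : Set (Set G)} (h : IsSimplex Ps Sx) (g : G) :
    IsSimplex Ps (g • Sx) := by
  refine ⟨?_, fun F hF hne => ?_⟩
  · rintro _ ⟨A, hA, rfl⟩
    obtain ⟨x, P, hP, rfl⟩ := h.1 hA
    exact ⟨g * x, P, hP, (mul_smul g x _).symm⟩
  · have hF' : ↑(g⁻¹ • F) ⊆ Sx := by
      rw [Finset.coe_smul_finset]
      exact Set.subset_smul_set_iff.mp hF
    rw [← smul_inv_smul g F, ← conj_iInf_stabilizer, infinite_conj_iff]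
    exact h.2 _ hF' hne.smul_finset

theorem IsMaxSimplex.smul {Sx : Set (Set G)} (h : IsMaxSimplex Ps Sx) (g : G) :
    IsMaxSimplex Ps (g • Sx) := by
  refine ⟨h.1.smul g, fun T hT hsub => ?_⟩
  have := h.2 (g⁻¹ • T) (hT.smul g⁻¹) (Set.smul_set_subset_iff_subset_inv_smul_set.mp hsub)
  rw [← this, smul_inv_smul]

theorem IsSimplex.finite (hheight : HasFiniteHeight Ps) {Sx : Set (Set G)}
    (h : IsSimplex Ps Sx) : Sx.Finite := by
  obtain ⟨n, hn⟩ := hheight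
  by_contra hinf
  obtain ⟨F, hFS, hcard⟩ := Set.Infinite.exists_subset_card_eq hinf (n + 1)
  have hne : F.Nonempty := Finset.card_pos.mp (by omega)
  have := hn F (hFS.trans h.1) (h.2 F hFS hne)
  omega

theorem isSimplex_of_infinite_fixingSubgroup {T : Set (Set G)} (hT : T ⊆ cosets Ps)
    (hfix : ((fixingSubgroup G T : Subgroup G) : Set G).Infinite) : IsSimplex Ps T := by
  refine ⟨hT, fun F hF _ => hfix.mono fun x hx => ?_⟩
  simp only [SetLike.mem_coe, Subgroup.mem_iInf, mem_stabilizer_iff]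
  exact fun A hA => (mem_fixingSubgroup_iff G).mp hx A (hF hA)

theorem IsMaxSimplex.eq_of_infinite_stabilizer_inf (hheight : HasFiniteHeight Ps)
    {Sx Sx' : Set (Set G)} (hm : IsMaxSimplex Ps Sx) (hm' : IsMaxSimplex Ps Sx')
    (hinf : ((stabilizer G Sx ⊓ stabilizer G Sx' : Subgroup G) : Set G).Infinite) :
    Sx = Sx' := by
  set K := stabilizer G Sx ⊓ stabilizer G Sx'
  have hrel : (fixingSubgroup G (Sx ∪ Sx')).relIndex K ≠ 0 := by
    rw [fixingSubgroup_union]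
    exact Subgroup.relIndex_inf_ne_zero
      (mt (Subgroup.relIndex_eq_zero_of_le_right inf_le_left)
        (relIndex_fixingSubgroup_stabilizer_ne_zero (hm.1.finite hheight)))
      (mt (Subgroup.relIndex_eq_zero_of_le_right inf_le_right)
        (relIndex_fixingSubgroup_stabilizer_ne_zero (hm'.1.finite hheight)))
  have hU : IsSimplex Ps (Sx ∪ Sx') :=
    isSimplex_of_infinite_fixingSubgroup (Set.union_subset hm.1.1 hm'.1.1)
      ((Subgroup.infinite_inf_of_relIndex_ne_zero hrel hinf).mono inf_le_left)
  rw [← hm.2 _ hU Set.subset_union_left, hm'.2 _ hU Set.subset_union_right]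

theorem IsMaxSimplex.smul_eq_of_infinite_conj_inf (hheight : HasFiniteHeight Ps)
    {Sx Sx' : Set (Set G)} (hm : IsMaxSimplex Ps Sx) (hm' : IsMaxSimplex Ps Sx') {g : G}
    (hinf : ((conj g (stabilizer G Sx) ⊓ stabilizer G Sx' : Subgroup G) : Set G).Infinite) :
    g • Sx = Sx' := by
  rw [conj_stabilizer] at hinf
  exact (hm.smul g).eq_of_infinite_stabilizer_inf hheight hm' hinf

theorem statement17_general (Ps : Finset (Subgroup G))
    (hheight : HasFiniteHeight Ps) :
    (∀ Sx Sx' : Set (Set G), IsMaxSimplex Ps Sx → IsMaxSimplex Ps Sx' → ∀ g : G,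
      ((conj g (MulAction.stabilizer G Sx) ⊓ MulAction.stabilizer G Sx' :
          Subgroup G) : Set G).Infinite →
      g • Sx = Sx' ∧ conj g (MulAction.stabilizer G Sx) = MulAction.stabilizer G Sx') ∧
    (∀ Qc : Set (Subgroup G),
      (∀ Q ∈ Qc, ∃ Sx : Set (Set G), IsMaxSimplex Ps Sx ∧ Q = MulAction.stabilizer G Sx) →
      (∀ Sx : Set (Set G), IsMaxSimplex Ps Sx →
        ∃ Q ∈ Qc, ∃ g : G, conj g Q = MulAction.stabilizer G Sx) →
      (∀ Q ∈ Qc, ∀ Q' ∈ Qc, (∃ g : G, conj g Q = Q') → Q = Q') →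
      AlmostMalnormal Qc) := by
  have hconj : ∀ Sx Sx' : Set (Set G), IsMaxSimplex Ps Sx → IsMaxSimplex Ps Sx' → ∀ g : G,
      ((conj g (stabilizer G Sx) ⊓ stabilizer G Sx' : Subgroup G) : Set G).Infinite →
      g • Sx = Sx' ∧ conj g (stabilizer G Sx) = stabilizer G Sx' := by
    intro Sx Sx' hm hm' g hinf
    have hg := hm.smul_eq_of_infinite_conj_inf hheight hm' hinf
    exact ⟨hg, by rw [conj_stabilizer, hg]⟩
  refine ⟨hconj, ?_⟩
  intro Qc hQc _ hrep Q hQ Q' hQ' g hinf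
  obtain ⟨Sx, hm, rfl⟩ := hQc Q hQ
  obtain ⟨Sx', hm', rfl⟩ := hQc Q' hQ'
  obtain ⟨hg, hgQ⟩ := hconj Sx Sx' hm hm' g hinf
  have hQQ' := hrep _ hQ _ hQ' ⟨g, hgQ⟩
  have hSS' : Sx = Sx' := hm.eq_of_infinite_stabilizer_inf hheight hm' <| by
    rw [hQQ', inf_idem]
    exact hinf.mono inf_le_right
  exact ⟨hQQ', by rw [mem_stabilizer_iff, hg, hSS']⟩

/-- For a group pair of finite height: if `Q`, `Q'` are the setwise stabilizers of maximal
simplices `Sx`, `Sx'` and `gQg⁻¹ ∩ Q'` is infinite, then `gSx = Sx'` and `gQg⁻¹ = Q'`.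
Consequently a commensurated core (representatives, no two conjugate, of the conjugacy
classes of setwise stabilizers of maximal simplices) is an almost malnormal collection. -/
theorem statement17 (S : Finset G) (Ps : Finset (Subgroup G)) (hpair : IsGroupPair S Ps)
    (hheight : HasFiniteHeight Ps) :
    (∀ Sx Sx' : Set (Set G), IsMaxSimplex Ps Sx → IsMaxSimplex Ps Sx' → ∀ g : G,
      ((conj g (MulAction.stabilizer G Sx) ⊓ MulAction.stabilizer G Sx' :
          Subgroup G) : Set G).Infinite →
      g • Sx = Sx' ∧ conj g (MulAction.stabilizer G Sx) = MulAction.stabilizer G Sx') ∧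
    (∀ Qc : Set (Subgroup G),
      (∀ Q ∈ Qc, ∃ Sx : Set (Set G), IsMaxSimplex Ps Sx ∧ Q = MulAction.stabilizer G Sx) →
      (∀ Sx : Set (Set G), IsMaxSimplex Ps Sx →
        ∃ Q ∈ Qc, ∃ g : G, conj g Q = MulAction.stabilizer G Sx) →
      (∀ Q ∈ Qc, ∀ Q' ∈ Qc, (∃ g : G, conj g Q = Q') → Q = Q') →
      AlmostMalnormal Qc) :=
  statement17_general Ps hheight

end CIC
end
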